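/- For any simple N-party holographic graph model G and any nonempty subsystem X ⊆ ⟦N⟧, there exists a partition {Y_1,…,Y_m} of X into nonempty subsets such that the vertex sets of the connected components of the subgraph G_X are exactly the minimal min-cuts mC_{Y_1},…,mC_{Y_m}; that is, each connected component of G_X is the subgraph of G induced by the minimal min-cut of some Y_i ⊆ X, and G_X = G_{Y_1} ⊕ ⋯ ⊕ G_{Y_m}. -/

import Mathlib

namespace HEC

/-- The parties `⟦N⟧ = {0,1,…,N}`, where `0` is the purifier. -/
abbrev Party (N : ℕ) := Fin (N + 1)

/-- A collection of parties. -/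
abbrev PSet (N : ℕ) := Finset (Party N)

/-- An `N`-party holographic graph model: a finite weighted graph with no loops or
multiple edges (encoded by a symmetric nonnegative weight function whose support is
the edge set, so that every edge has strictly positive weight and the diagonal
vanishes), together with a labeling of the boundary vertices (those with
`label v = some ℓ`) by parties in `⟦N⟧` such that every party labels at least one
boundary vertex. -/
structure GraphModel (N : ℕ) where
  V : Type
  [fintypeV : Fintype V]
  [decEqV : DecidableEq V]
  w : V → V → ℝ
  w_symm : ∀ u v : V, w u v = w v u
  w_loopless : ∀ v : V, w v v = 0
  w_nonneg : ∀ u v : V, 0 ≤ w u v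
  label : V → Option (Party N)
  label_surj : ∀ ℓ : Party N, ∃ v : V, label v = some ℓ

attribute [instance] GraphModel.fintypeV GraphModel.decEqV

/-- `C` is a `Y`-cut: its intersection with the boundary vertices consists exactly of
the boundary vertices labeled by parties in `Y`. -/
def IsCut {N : ℕ} (G : GraphModel N) (Y : PSet N) (C : Finset G.V) : Prop :=
  ∀ v : G.V, ∀ ℓ : Party N, G.label v = some ℓ → (v ∈ C ↔ ℓ ∈ Y)

/-- The cost `‖C‖` of a cut: the total weight of the edges with exactly one endpoint
in `C`. -/
def cutCost {N : ℕ} (G : GraphModel N) (C : Finset G.V) : ℝ :=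
  ∑ u ∈ C, ∑ v ∈ Cᶜ, G.w u v

/-- `C` is a min-cut for `Y`: a `Y`-cut of minimal cost among all `Y`-cuts. -/
def IsMinCut {N : ℕ} (G : GraphModel N) (Y : PSet N) (C : Finset G.V) : Prop :=
  IsCut G Y C ∧ ∀ C' : Finset G.V, IsCut G Y C' → cutCost G C ≤ cutCost G C'

/-- `C` is a minimal min-cut for `Y`: a min-cut for `Y` which is minimal with respect
to set inclusion among all min-cuts for `Y`. -/
def IsMinimalMinCut {N : ℕ} (G : GraphModel N) (Y : PSet N) (C : Finset G.V) : Prop :=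
  IsMinCut G Y C ∧ ∀ C' : Finset G.V, IsMinCut G Y C' → C' ⊆ C → C' = C

/-- The min-cut entropy `S_Y`: the minimum of `‖C‖` over all `Y`-cuts. -/
noncomputable def gEntropy {N : ℕ} (G : GraphModel N) (Y : PSet N) : ℝ :=
  sInf (cutCost G '' {C : Finset G.V | IsCut G Y C})

/-- The mutual information `I(Y:Z) = S_Y + S_Z - S_{Y∪Z}` computed from min-cuts. -/
noncomputable def gMI {N : ℕ} (G : GraphModel N) (Y Z : PSet N) : ℝ :=
  gEntropy G Y + gEntropy G Z - gEntropy G (Y ∪ Z)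

/-- Reachability inside the subgraph of `G` induced by the vertex set `C`. -/
def Reaches {N : ℕ} (G : GraphModel N) (C : Finset G.V) : G.V → G.V → Prop :=
  Relation.ReflTransGen (fun a b => a ∈ C ∧ b ∈ C ∧ 0 < G.w a b)

/-- `D` is the vertex set of a connected component of the subgraph of `G` induced
by `C`. -/
def IsCompOf {N : ℕ} (G : GraphModel N) (C D : Finset G.V) : Prop :=
  ∃ v ∈ C, ∀ u : G.V, u ∈ D ↔ (u ∈ C ∧ Reaches G C v u)

/-- The graph model is simple: the labeling is a bijection between the boundary
vertices and `⟦N⟧`, i.e. every party labels exactly one vertex. -/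
def IsSimple {N : ℕ} (G : GraphModel N) : Prop :=
  ∀ ℓ : Party N, ∃! v : G.V, G.label v = some ℓ

/-- The underlying simple graph of a graph model: an edge wherever the weight is
strictly positive. -/
def GraphModel.toSimpleGraph {N : ℕ} (G : GraphModel N) : SimpleGraph G.V where
  Adj u v := 0 < G.w u v
  symm := by
    constructor
    intro u v h
    try dsimp only at h ⊢
    rw [G.w_symm v u]
    exact h
  loopless := by
    constructor
    intro v h
    try dsimp only at h ⊢
    rw [G.w_loopless v] at h
    exact lt_irrefl 0 h


section Aux

variable {N : ℕ} (G : GraphModel N)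

lemma cutCost_nonneg (C : Finset G.V) : 0 ≤ cutCost G C :=
  Finset.sum_nonneg fun u _ => Finset.sum_nonneg fun v _ => G.w_nonneg u v

lemma cutCost_eq (C : Finset G.V) :
    cutCost G C = ∑ u : G.V, ∑ v : G.V, if u ∈ C ∧ v ∉ C then G.w u v else 0 := by
  symm
  calc (∑ u : G.V, ∑ v : G.V, if u ∈ C ∧ v ∉ C then G.w u v else 0)
      = ∑ u : G.V, if u ∈ C then ∑ v ∈ Cᶜ, G.w u v else 0 := by
        refine Finset.sum_congr rfl fun u _ => ?_
        by_cases hu : u ∈ C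
        · simp only [hu, true_and, if_true]
          rw [← Finset.sum_filter]
          refine Finset.sum_congr ?_ fun _ _ => rfl
          ext v; simp
        · simp [hu]
    _ = ∑ u ∈ C, ∑ v ∈ Cᶜ, G.w u v := by
        rw [← Finset.sum_filter]
        refine Finset.sum_congr ?_ fun _ _ => rfl
        ext u; simp
    _ = cutCost G C := rfl

lemma cutCost_submodular (A B : Finset G.V) :
    cutCost G (A ∪ B) + cutCost G (A ∩ B) ≤ cutCost G A + cutCost G B := by
  simp only [cutCost_eq]
  rw [← Finset.sum_add_distrib, ← Finset.sum_add_distrib]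
  refine Finset.sum_le_sum fun u _ => ?_
  rw [← Finset.sum_add_distrib, ← Finset.sum_add_distrib]
  refine Finset.sum_le_sum fun v _ => ?_
  by_cases hua : u ∈ A <;> by_cases hub : u ∈ B <;>
    by_cases hva : v ∈ A <;> by_cases hvb : v ∈ B <;>
    simp [hua, hub, hva, hvb] <;> linarith [G.w_nonneg u v]

lemma cutCost_union_of_zero (A B : Finset G.V) (hd : Disjoint A B)
    (hz : ∀ u ∈ A, ∀ v ∈ B, G.w u v = 0) :
    cutCost G (A ∪ B) = cutCost G A + cutCost G B := by
  simp only [cutCost_eq]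
  rw [← Finset.sum_add_distrib]
  refine Finset.sum_congr rfl fun u _ => ?_
  rw [← Finset.sum_add_distrib]
  refine Finset.sum_congr rfl fun v _ => ?_
  have hd' := Finset.disjoint_left.mp hd
  by_cases hua : u ∈ A <;> by_cases hub : u ∈ B <;>
    by_cases hva : v ∈ A <;> by_cases hvb : v ∈ B <;>
    simp_all <;>
    first
      | exact (hz u hua v hvb).symm
      | exact (hz u hua v hvb)
      | (rw [G.w_symm]; exact (hz v hva u hub).symm)
      | (rw [G.w_symm]; exact hz v hva u hub)

lemma reaches_symm {C : Finset G.V} {a b : G.V} (h : Reaches G C a b) :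
    Reaches G C b a :=
  (@Relation.ReflTransGen.symmetric _ _
    ⟨fun x y hxy => ⟨hxy.2.1, hxy.1, by rw [G.w_symm]; exact hxy.2.2⟩⟩).symm _ _ h

/-- Cross edges from a component to the rest of `C` have zero weight. -/
lemma comp_cross_zero {C D : Finset G.V} {v₀ : G.V}
    (hD : ∀ u : G.V, u ∈ D ↔ (u ∈ C ∧ Reaches G C v₀ u))
    {u x : G.V} (hu : u ∈ D) (hxC : x ∈ C) (hxD : x ∉ D) : G.w u x = 0 := by
  by_contra h
  have hpos : 0 < G.w u x := lt_of_le_of_ne (G.w_nonneg u x) (Ne.symm h)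
  have hu' := (hD u).mp hu
  exact hxD ((hD x).mpr ⟨hxC, hu'.2.tail ⟨hu'.1, hxC, hpos⟩⟩)

/-- Key lemma: a connected component `D` of a minimal min-cut `CX` for `X` is the
minimal min-cut for the (nonempty) set of parties whose boundary vertex lies in `D`. -/
lemma comp_key {N : ℕ} {G : GraphModel N} {X : PSet N} {CX : Finset G.V}
    (hCX : IsMinimalMinCut G X CX) {D : Finset G.V} (hD : IsCompOf G CX D)
    (bv : Party N → G.V) (hbv : ∀ ℓ, G.label (bv ℓ) = some ℓ)
    (huniq : ∀ ℓ v, G.label v = some ℓ → v = bv ℓ) :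
    (X.filter (fun ℓ => bv ℓ ∈ D)).Nonempty ∧
      IsMinimalMinCut G (X.filter (fun ℓ => bv ℓ ∈ D)) D := by
  obtain ⟨v₀, hv₀C, hch⟩ := hD
  obtain ⟨⟨hcut, hmin⟩, hminimal⟩ := hCX
  set Y : PSet N := X.filter (fun ℓ => bv ℓ ∈ D) with hYdef
  have hDsub : D ⊆ CX := fun u hu => ((hch u).mp hu).1
  have hv₀D : v₀ ∈ D := (hch v₀).mpr ⟨hv₀C, Relation.ReflTransGen.refl⟩
  have hbvmem : ∀ ℓ, bv ℓ ∈ CX ↔ ℓ ∈ X := fun ℓ => hcut (bv ℓ) ℓ (hbv ℓ)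
  have hYcut : IsCut G Y D := by
    intro v ℓ hv
    have hveq : v = bv ℓ := huniq ℓ v hv
    subst hveq
    rw [hYdef, Finset.mem_filter]
    constructor
    · intro h; exact ⟨(hbvmem ℓ).mp (hDsub h), h⟩
    · intro h; exact h.2
  have hsplit : cutCost G CX = cutCost G D + cutCost G (CX \ D) := by
    have hU : D ∪ (CX \ D) = CX := Finset.union_sdiff_of_subset hDsub
    have h := cutCost_union_of_zero G D (CX \ D) Finset.disjoint_sdiff
      (fun u hu v hv =>
        comp_cross_zero G hch hu (Finset.mem_sdiff.mp hv).1 (Finset.mem_sdiff.mp hv).2)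
    rw [hU] at h
    exact h
  have hEcut : ∀ C' : Finset G.V, IsCut G Y C' → IsCut G X ((CX \ D) ∪ C') := by
    intro C' hC' v ℓ hv
    have hveq : v = bv ℓ := huniq ℓ v hv
    subst hveq
    have h1 := hC' (bv ℓ) ℓ (hbv ℓ)
    rw [Finset.mem_union, Finset.mem_sdiff]
    constructor
    · rintro (⟨h, _⟩ | h)
      · exact (hbvmem ℓ).mp h
      · exact Finset.mem_of_mem_filter ℓ (h1.mp h)
    · intro hℓX
      by_cases hd : bv ℓ ∈ D
      · exact Or.inr (h1.mpr (Finset.mem_filter.mpr ⟨hℓX, hd⟩))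
      · exact Or.inl ⟨(hbvmem ℓ).mpr hℓX, hd⟩
  have hDmin : IsMinCut G Y D := by
    refine ⟨hYcut, fun C' hC' => ?_⟩
    have h2 := hmin _ (hEcut C' hC')
    have h3 := cutCost_submodular G (CX \ D) C'
    have h4 := cutCost_nonneg G ((CX \ D) ∩ C')
    linarith
  have hYne : Y.Nonempty := by
    rw [Finset.nonempty_iff_ne_empty]
    intro hYe
    have hC'cut : IsCut G X (CX \ D) := by
      intro v ℓ hv
      have hveq : v = bv ℓ := huniq ℓ v hv
      subst hveq
      rw [Finset.mem_sdiff]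
      constructor
      · intro h; exact (hbvmem ℓ).mp h.1
      · intro hℓX
        refine ⟨(hbvmem ℓ).mpr hℓX, fun hd => ?_⟩
        have : ℓ ∈ Y := Finset.mem_filter.mpr ⟨hℓX, hd⟩
        rw [hYe] at this
        exact absurd this (Finset.notMem_empty ℓ)
    have h5 := hmin _ hC'cut
    have h6 := cutCost_nonneg G D
    have hfeq : cutCost G (CX \ D) = cutCost G CX := by linarith
    have hEmin : IsMinCut G X (CX \ D) :=
      ⟨hC'cut, fun C'' h'' => hfeq ▸ hmin _ h''⟩
    have heq := hminimal _ hEmin (Finset.sdiff_subset)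
    have : v₀ ∈ CX \ D := by rw [heq]; exact hv₀C
    exact (Finset.mem_sdiff.mp this).2 hv₀D
  refine ⟨hYne, hDmin, fun C' hC' hsub => ?_⟩
  have hfeq : cutCost G C' = cutCost G D :=
    le_antisymm (hC'.2 D hYcut) (hDmin.2 C' hC'.1)
  have hdisj : Disjoint (CX \ D) C' := Finset.sdiff_disjoint.mono_right hsub
  have hEadd : cutCost G ((CX \ D) ∪ C')
      = cutCost G (CX \ D) + cutCost G C' := by
    refine cutCost_union_of_zero G _ _ hdisj fun u hu v hv => ?_
    rw [G.w_symm]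
    exact comp_cross_zero G hch (hsub hv) (Finset.mem_sdiff.mp hu).1
      (Finset.mem_sdiff.mp hu).2
  have hE : cutCost G ((CX \ D) ∪ C') = cutCost G CX := by
    rw [hEadd, hfeq]; linarith
  have hEmin : IsMinCut G X ((CX \ D) ∪ C') :=
    ⟨hEcut C' hC'.1, fun C'' h'' => hE ▸ hmin _ h''⟩
  have hEsub : (CX \ D) ∪ C' ⊆ CX :=
    Finset.union_subset Finset.sdiff_subset (hsub.trans hDsub)
  have heq := hminimal _ hEmin hEsub
  refine Finset.Subset.antisymm hsub fun u hu => ?_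
  have huCX : u ∈ (CX \ D) ∪ C' := by rw [heq]; exact hDsub hu
  rcases Finset.mem_union.mp huCX with h | h
  · exact absurd hu (Finset.mem_sdiff.mp h).2
  · exact h

end Aux

/-- For any simple graph model `G` and nonempty subsystem `X`, there
is a partition `{Y_1,…,Y_m}` of `X` into nonempty subsets such that the vertex sets of
the connected components of `G_X` are exactly the minimal min-cuts `mC_{Y_i}`. -/
theorem statement2 {N : ℕ} (hN : 2 ≤ N) (G : GraphModel N) (hG : IsSimple G)
    (X : PSet N) (hX : X.Nonempty)
    (CX : Finset G.V) (hCX : IsMinimalMinCut G X CX) :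
    ∃ Pr : Finset (PSet N),
      (∀ p ∈ Pr, p.Nonempty) ∧
      (∀ p ∈ Pr, ∀ q ∈ Pr, p ≠ q → p ∩ q = ∅) ∧
      Pr.sup id = X ∧
      (∀ p ∈ Pr, ∃ D : Finset G.V, IsMinimalMinCut G p D ∧ IsCompOf G CX D) ∧
      (∀ D : Finset G.V, IsCompOf G CX D → ∃ p ∈ Pr, IsMinimalMinCut G p D) := by
  classical
  set bv : Party N → G.V := fun ℓ => (hG ℓ).choose with hbvdef
  have hbv : ∀ ℓ, G.label (bv ℓ) = some ℓ := fun ℓ => (hG ℓ).choose_spec.1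
  have huniq : ∀ ℓ v, G.label v = some ℓ → v = bv ℓ :=
    fun ℓ v h => (hG ℓ).choose_spec.2 v h
  have hcut : IsCut G X CX := hCX.1.1
  have hbvmem : ∀ ℓ, bv ℓ ∈ CX ↔ ℓ ∈ X := fun ℓ => hcut (bv ℓ) ℓ (hbv ℓ)
  set comp : G.V → Finset G.V := fun v => CX.filter (fun u => Reaches G CX v u)
    with hcompdef
  have hcompmem : ∀ v u, u ∈ comp v ↔ (u ∈ CX ∧ Reaches G CX v u) := by
    intro v u; rw [hcompdef]; exact Finset.mem_filter
  have hcomp : ∀ v ∈ CX, IsCompOf G CX (comp v) :=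
    fun v hv => ⟨v, hv, fun u => hcompmem v u⟩
  have hcompeq : ∀ D : Finset G.V, IsCompOf G CX D → ∀ x ∈ D, comp x = D := by
    rintro D ⟨w₀, hw₀, hch⟩ x hx
    ext u
    rw [hcompmem, hch]
    have hr : Reaches G CX w₀ x := ((hch x).mp hx).2
    constructor
    · rintro ⟨hu, hru⟩; exact ⟨hu, hr.trans hru⟩
    · rintro ⟨hu, hru⟩; exact ⟨hu, (reaches_symm G hr).trans hru⟩
  refine ⟨X.image (fun ℓ => X.filter (fun ℓ' => bv ℓ' ∈ comp (bv ℓ))), ?_, ?_, ?_, ?_, ?_⟩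
  · rintro p hp
    obtain ⟨ℓ, hℓX, rfl⟩ := Finset.mem_image.mp hp
    exact (comp_key hCX (hcomp (bv ℓ) ((hbvmem ℓ).mpr hℓX)) bv hbv huniq).1
  · rintro p hp q hq hpq
    obtain ⟨ℓ₁, hℓ₁X, rfl⟩ := Finset.mem_image.mp hp
    obtain ⟨ℓ₂, hℓ₂X, rfl⟩ := Finset.mem_image.mp hq
    by_contra hne
    obtain ⟨ℓ, hℓ⟩ := Finset.nonempty_iff_ne_empty.mpr hne
    obtain ⟨h1, h2⟩ := Finset.mem_inter.mp hℓ
    have h1' := (Finset.mem_filter.mp h1).2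
    have h2' := (Finset.mem_filter.mp h2).2
    have e1 : comp (bv ℓ) = comp (bv ℓ₁) :=
      hcompeq _ (hcomp (bv ℓ₁) ((hbvmem ℓ₁).mpr hℓ₁X)) _ h1'
    have e2 : comp (bv ℓ) = comp (bv ℓ₂) :=
      hcompeq _ (hcomp (bv ℓ₂) ((hbvmem ℓ₂).mpr hℓ₂X)) _ h2' 
    exact hpq (by rw [← e1, e2])
  · refine le_antisymm (Finset.sup_le ?_) ?_
    · rintro p hp
      obtain ⟨ℓ, hℓX, rfl⟩ := Finset.mem_image.mp hp
      exact Finset.filter_subset _ _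
    · intro ℓ hℓX
      have hself : ℓ ∈ X.filter (fun ℓ' => bv ℓ' ∈ comp (bv ℓ)) := by
        refine Finset.mem_filter.mpr ⟨hℓX, ?_⟩
        exact (hcompmem (bv ℓ) (bv ℓ)).mpr
          ⟨(hbvmem ℓ).mpr hℓX, Relation.ReflTransGen.refl⟩
      have hmem : (X.filter (fun ℓ' => bv ℓ' ∈ comp (bv ℓ)))
          ∈ X.image (fun ℓ => X.filter (fun ℓ' => bv ℓ' ∈ comp (bv ℓ))) :=
        Finset.mem_image_of_mem _ hℓX
      exact Finset.le_sup (f := id) hmem hself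
  · rintro p hp
    obtain ⟨ℓ, hℓX, rfl⟩ := Finset.mem_image.mp hp
    have hco := hcomp (bv ℓ) ((hbvmem ℓ).mpr hℓX)
    exact ⟨comp (bv ℓ), (comp_key hCX hco bv hbv huniq).2, hco⟩
  · intro D hD
    obtain ⟨hYne, hYmin⟩ := comp_key hCX hD bv hbv huniq
    obtain ⟨ℓ, hℓ⟩ := hYne
    rw [Finset.mem_filter] at hℓ
    have e1 : comp (bv ℓ) = D := hcompeq D hD _ hℓ.2
    refine ⟨X.filter (fun ℓ' => bv ℓ' ∈ comp (bv ℓ)), Finset.mem_image_of_mem _ hℓ.1, ?_⟩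
    rw [e1]
    exact hYmin


end HEC
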